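/- arXiv:math/0505496 — 3 statements merged into one kernel-verified Lean document; each statement's English description precedes it below -/
import Mathlib

section
/- Let X be a metric space and f : X → ℝ a function that is bounded and uniformly continuous on all of X. Then f_λ converges to f uniformly on X as λ → 0⁺. -/
/-! Always `f_λ ≤ f` (take `y = x`). Conversely, given `ε`, uniform continuity gives `δ` with
`f x - f y ≤ ε` whenever `d(x, y) < δ`, while for `d(x, y) ≥ δ` the penalty `d(x, y)² / (2λ)`
exceeds the oscillation `2k` of `f` once `4kλ ≤ δ²`; so `f x - ε ≤ f_λ x` for all small `λ`. -/

/-- Real-valued Moreau envelope. -/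
noncomputable def moreauEnvR {X : Type*} [MetricSpace X] (f : X → ℝ) (l : ℝ) (x : X) : ℝ :=
  ⨅ y, (f y + dist x y ^ 2 / (2 * l))

open Filter Set Topology

section

variable {X : Type*} [MetricSpace X] {f : X → ℝ} {l : ℝ}

theorem bddBelow_range_moreauEnvR_objective (hf : BddBelow (range f)) (hl : 0 ≤ l) (x : X) :
    BddBelow (range fun y => f y + dist x y ^ 2 / (2 * l)) := by
  obtain ⟨m, hm⟩ := hf
  refine ⟨m, ?_⟩
  rintro _ ⟨y, rfl⟩
  have hfy : m ≤ f y := hm (mem_range_self y)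
  have : 0 ≤ dist x y ^ 2 / (2 * l) := by positivity
  linarith

theorem moreauEnvR_le_self (hf : BddBelow (range f)) (hl : 0 ≤ l) (x : X) :
    moreauEnvR f l x ≤ f x := by
  simpa [moreauEnvR] using ciInf_le (bddBelow_range_moreauEnvR_objective hf hl x) x

theorem sub_le_moreauEnvR {x : X} {δ ε M : ℝ} (hl : 0 < l) (hδ : 0 ≤ δ) (hε : 0 ≤ ε)
    (hnear : ∀ y, dist x y < δ → f x - f y ≤ ε) (hfar : ∀ y, f x - f y ≤ M)
    (hlδ : 2 * M * l ≤ δ ^ 2) : f x - ε ≤ moreauEnvR f l x := by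
  have : Nonempty X := ⟨x⟩
  refine le_ciInf fun y => ?_
  have hpen : 0 ≤ dist x y ^ 2 / (2 * l) := by positivity
  rcases lt_or_ge (dist x y) δ with hxy | hxy
  · linarith [hnear y hxy]
  · have hMδ : M ≤ δ ^ 2 / (2 * l) := by
      rw [le_div_iff₀ (by positivity)]; linarith
    have hδd : δ ^ 2 / (2 * l) ≤ dist x y ^ 2 / (2 * l) := by gcongr
    linarith [hfar y]

theorem tendstoUniformly_moreauEnvR {k : ℝ} (hk : ∀ x, |f x| ≤ k) (hu : UniformContinuous f) :
    TendstoUniformly (moreauEnvR f) f (𝓝[>] 0) := by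
  rw [Metric.tendstoUniformly_iff]
  intro ε hε
  obtain ⟨δ, hδ, hδf⟩ := Metric.uniformContinuous_iff.mp hu (ε / 2) (half_pos hε)
  have hsmall : ∀ᶠ l in 𝓝[>] (0 : ℝ), 4 * k * l < δ ^ 2 := by
    have : Tendsto (fun l => 4 * k * l) (𝓝[>] 0) (𝓝 (4 * k * 0)) :=
      (tendsto_nhdsWithin_of_tendsto_nhds tendsto_id).const_mul _
    exact this.eventually (gt_mem_nhds (by simpa using pow_pos hδ 2))
  filter_upwards [self_mem_nhdsWithin, hsmall] with l (hl : 0 < l) hkl x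
  have hbdd : BddBelow (range f) := ⟨-k, by rintro _ ⟨y, rfl⟩; exact neg_le_of_abs_le (hk y)⟩
  have hupper := moreauEnvR_le_self hbdd hl.le x
  have hlower : f x - ε / 2 ≤ moreauEnvR f l x := by
    refine sub_le_moreauEnvR (M := 2 * k) hl hδ.le (half_pos hε).le (fun y hy => ?_)
      (fun y => ?_) (by linarith)
    · exact (abs_lt.mp (Real.dist_eq _ _ ▸ hδf hy)).2.le
    · linarith [le_of_abs_le (hk x), neg_le_of_abs_le (hk y)]
  rw [Real.dist_eq, abs_lt]
  constructor <;> linarith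

end

theorem moreauEnvR_tendsto_uniformly_general {X : Type*} [MetricSpace X]
    (f : X → ℝ) (k : ℝ) (hk : ∀ x, |f x| ≤ k) (hu : UniformContinuous f) :
    ∀ ε > (0 : ℝ), ∃ l₀ > (0 : ℝ), ∀ l : ℝ, 0 < l → l < l₀ →
      ∀ x, |moreauEnvR f l x - f x| ≤ ε := by
  intro ε hε
  obtain ⟨l₀, hl₀, hclose⟩ := (nhdsGT_basis (0 : ℝ)).eventually_iff.mp
    (Metric.tendstoUniformly_iff.mp (tendstoUniformly_moreauEnvR hk hu) ε hε)
  refine ⟨l₀, hl₀, fun l hl hll x => ?_⟩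
  have := hclose ⟨hl, hll⟩ x
  rw [dist_comm, Real.dist_eq] at this
  exact this.le

/-- If `f` is bounded and uniformly continuous on `X`, then `f_λ → f` uniformly on `X`
as `λ → 0⁺`. -/
theorem moreauEnvR_tendsto_uniformly {X : Type*} [MetricSpace X] [Nonempty X]
    (f : X → ℝ) (k : ℝ) (hk : ∀ x, |f x| ≤ k) (hu : UniformContinuous f) :
    ∀ ε > (0 : ℝ), ∃ l₀ > (0 : ℝ), ∀ l : ℝ, 0 < l → l < l₀ →
      ∀ x, |moreauEnvR f l x - f x| ≤ ε :=
  moreauEnvR_tendsto_uniformly_general f k hk hu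
end

section
/- Let E be a real normed space and f : E → ℝ a convex function that is differentiable (Fréchet differentiable) at every point. Then f is of class C¹, i.e. the derivative map x ↦ Df(x) is continuous from E to the dual space with the operator norm. -/
open Filter Set Topology

/-- Gradient inequality: a convex differentiable function lies above its tangent plane. -/
theorem grad_ineq_aux {E : Type*} [NormedAddCommGroup E] [NormedSpace ℝ E]
    {f : E → ℝ} (hconv : ConvexOn ℝ Set.univ f) {φ : E →L[ℝ] ℝ} {x : E}
    (hd : HasFDerivAt f φ x) (y : E) : φ (y - x) ≤ f y - f x := by
  have hg : HasDerivAt (fun t : ℝ => f (x + t • (y - x))) (φ (y - x)) 0 := by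
    have h1 : HasDerivAt (fun t : ℝ => x + t • (y - x)) (y - x) 0 := by
      simpa using (((hasDerivAt_id (0:ℝ)).smul_const (y - x)).const_add x)
    have h2 : HasFDerivAt f φ (x + (0:ℝ) • (y - x)) := by simpa using hd
    exact h2.comp_hasDerivAt 0 h1
  have hslope := hasDerivAt_iff_tendsto_slope.1 hg
  have hslope' : Tendsto (slope (fun t : ℝ => f (x + t • (y - x))) 0) (𝓝[>] 0)
      (𝓝 (φ (y - x))) :=
    hslope.mono_left (nhdsWithin_mono 0 (fun t ht => ne_of_gt ht))
  refine le_of_tendsto hslope' ?_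
  filter_upwards [Ioo_mem_nhdsGT_of_mem (by norm_num : (0:ℝ) ∈ Set.Ico 0 1)] with t ht
  have hcv := hconv.2 (Set.mem_univ x) (Set.mem_univ y)
    (by linarith [ht.2] : (0:ℝ) ≤ 1 - t) (le_of_lt ht.1) (by ring)
  have heq : x + t • (y - x) = (1 - t) • x + t • y := by module
  have hcv' : f (x + t • (y - x)) ≤ (1 - t) * f x + t * f y := by
    rw [heq]; simpa [smul_eq_mul] using hcv
  rw [slope_def_field, div_le_iff₀ (by simpa using ht.1)]
  simp only [zero_smul, add_zero, sub_zero]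
  nlinarith

/-- A convex function on a normed space that is Fréchet differentiable everywhere is `C¹`:
the derivative map is continuous into the dual. -/
theorem convex_differentiable_is_C1 {E : Type*} [NormedAddCommGroup E] [NormedSpace ℝ E]
    (f : E → ℝ) (hconv : ConvexOn ℝ Set.univ f)
    (f' : E → E →L[ℝ] ℝ) (hd : ∀ x, HasFDerivAt f (f' x) x) :
    Continuous f' := by
  rw [Metric.continuous_iff]
  intro x ε hε
  set ε' := ε / 8 with hε'def
  have hε'pos : 0 < ε' := by positivity
  have hlo := (hd x).isLittleO.def hε'pos
  rw [Metric.eventually_nhds_iff] at hlo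
  obtain ⟨δ, hδpos, hδ⟩ := hlo
  set t := δ / 4 with htdef
  have htpos : 0 < t := by positivity
  refine ⟨t, htpos, fun y hy => ?_⟩
  have hyx : ‖y - x‖ < t := by rwa [dist_eq_norm] at hy
  have hyx0 : 0 ≤ ‖y - x‖ := norm_nonneg _
  have key : ∀ h : E, ‖h‖ ≤ 1 → (f' y) h - (f' x) h ≤ 2 * ε' := by
    intro h hh
    have hh0 : 0 ≤ ‖h‖ := norm_nonneg _
    have A : t * (f' y) h ≤ f (y + t • h) - f y := by
      have := grad_ineq_aux hconv (hd y) (y + t • h)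
      simpa [map_smul, smul_eq_mul] using this
    have B : (f' x) (y - x) ≤ f y - f x := grad_ineq_aux hconv (hd x) y
    have C : f (y + t • h) ≤
        (1/2) * f (x + (2*t) • h) + (1/2) * f (x + (2:ℝ) • (y - x)) := by
      have h2 := hconv.2 (Set.mem_univ (x + (2*t) • h))
        (Set.mem_univ (x + (2:ℝ) • (y - x)))
        (by norm_num : (0:ℝ) ≤ 1/2) (by norm_num : (0:ℝ) ≤ 1/2) (by norm_num)
      have heq : (1/2 : ℝ) • (x + (2*t) • h) + (1/2 : ℝ) • (x + (2:ℝ) • (y - x))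
          = y + t • h := by module
      rw [heq] at h2
      simpa [smul_eq_mul] using h2
    have D1 : f (x + (2*t) • h) - f x - (2*t) * (f' x) h ≤ ε' * (2*t) := by
      have hz : dist (x + (2*t) • h) x < δ := by
        rw [dist_eq_norm, add_sub_cancel_left, norm_smul, Real.norm_eq_abs,
          abs_of_pos (by positivity : (0:ℝ) < 2*t)]
        nlinarith
      have h1 := hδ hz
      rw [add_sub_cancel_left, map_smul, smul_eq_mul, norm_smul] at h1
      simp only [Real.norm_eq_abs] at h1
      rw [abs_of_pos (by positivity : (0:ℝ) < 2*t)] at h1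
      have h2 := (abs_le.1 h1).2
      nlinarith [mul_le_of_le_one_right (by positivity : (0:ℝ) ≤ ε' * (2*t)) hh]
    have D2 : f (x + (2:ℝ) • (y - x)) - f x - 2 * (f' x) (y - x)
        ≤ ε' * (2 * ‖y - x‖) := by
      have hz : dist (x + (2:ℝ) • (y - x)) x < δ := by
        rw [dist_eq_norm, add_sub_cancel_left, norm_smul, Real.norm_eq_abs,
          abs_of_pos (by norm_num : (0:ℝ) < 2)]
        nlinarith
      have h1 := hδ hz
      rw [add_sub_cancel_left, map_smul, smul_eq_mul, norm_smul] at h1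
      simp only [Real.norm_eq_abs] at h1
      rw [abs_of_pos (by norm_num : (0:ℝ) < 2)] at h1
      have h2 := (abs_le.1 h1).2
      nlinarith
    have hmul : t * ((f' y) h - (f' x) h) ≤ t * (2 * ε') := by nlinarith
    exact le_of_mul_le_mul_left hmul htpos
  have hb : ‖f' y - f' x‖ ≤ 2 * ε' := by
    refine ContinuousLinearMap.opNorm_le_bound _ (by positivity) fun h => ?_
    rcases eq_or_ne h 0 with rfl | hne
    · simp
    · have hcpos : 0 < ‖h‖ := norm_pos_iff.2 hne
      have hnorm : ‖(‖h‖⁻¹ : ℝ) • h‖ ≤ 1 := by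
        rw [norm_smul, Real.norm_eq_abs, abs_of_pos (by positivity)]
        rw [inv_mul_cancel₀ hcpos.ne']
      have k1 := key _ hnorm
      have k2 := key (-((‖h‖⁻¹ : ℝ) • h)) (by rwa [norm_neg])
      rw [map_smul, map_smul, smul_eq_mul, smul_eq_mul] at k1
      rw [map_neg, map_neg, map_smul, map_smul, smul_eq_mul, smul_eq_mul] at k2
      have e : ‖h‖ * (‖h‖⁻¹ * (f' y) h - ‖h‖⁻¹ * (f' x) h)
          = (f' y) h - (f' x) h := by field_simp
      have k1' : (f' y) h - (f' x) h ≤ 2 * ε' * ‖h‖ := by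
        calc (f' y) h - (f' x) h
            = ‖h‖ * (‖h‖⁻¹ * (f' y) h - ‖h‖⁻¹ * (f' x) h) := e.symm
          _ ≤ ‖h‖ * (2 * ε') := mul_le_mul_of_nonneg_left k1 hcpos.le
          _ = 2 * ε' * ‖h‖ := by ring
      have k2' : -((f' y) h - (f' x) h) ≤ 2 * ε' * ‖h‖ := by
        calc -((f' y) h - (f' x) h)
            = ‖h‖ * (-(‖h‖⁻¹ * (f' y) h) - -(‖h‖⁻¹ * (f' x) h)) := by
              rw [← e]; ring
          _ ≤ ‖h‖ * (2 * ε') := mul_le_mul_of_nonneg_left k2 hcpos.le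
          _ = 2 * ε' * ‖h‖ := by ring
      have habs : |(f' y) h - (f' x) h| ≤ 2 * ε' * ‖h‖ :=
        abs_le.2 ⟨by linarith, k1'⟩
      calc ‖(f' y - f' x) h‖ = |(f' y) h - (f' x) h| := by
            simp [Real.norm_eq_abs]
        _ ≤ 2 * ε' * ‖h‖ := habs
  rw [dist_eq_norm]
  calc ‖f' y - f' x‖ ≤ 2 * ε' := hb
    _ < ε := by rw [hε'def]; linarith
end

section
/- Let H be a real Hilbert space, C ⊆ H a nonempty closed convex set, and U an open set containing C with d(C, H \ U) > 2r for some r > 0. Then the set D = { x : d(x,C) ≤ r } is a closed convex set with nonempty interior satisfying C ⊆ D ⊆ U, and its boundary ∂D = { x : d(x,C) = r } is a C¹ hypersurface (the gradient of d(·,C)² is nonzero at every point of ∂D). -/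
open Metric Set
open scoped RealInnerProductSpace

section aux

variable {H : Type*} [NormedAddCommGroup H] [InnerProductSpace ℝ H] [CompleteSpace H]

/-- Existence of a projection onto a nonempty closed convex set, with the variational
characterization. -/
lemma exists_proj_infDist (C : Set H) (hne : C.Nonempty) (hclosed : IsClosed C)
    (hconv : Convex ℝ C) (x : H) :
    ∃ p ∈ C, dist x p = Metric.infDist x C ∧ ∀ w ∈ C, ⟪x - p, w - p⟫ ≤ 0 := by
  obtain ⟨p, hp, hnorm⟩ :=
    exists_norm_eq_iInf_of_complete_convex hne hclosed.isComplete hconv x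
  refine ⟨p, hp, ?_, (norm_eq_iInf_iff_real_inner_le_zero hconv hp).1 hnorm⟩
  rw [Metric.infDist_eq_iInf, dist_eq_norm, hnorm]
  congr 1
  ext w
  rw [dist_eq_norm]

lemma convexOn_infDist_of_convex (C : Set H) (hne : C.Nonempty) (hclosed : IsClosed C)
    (hconv : Convex ℝ C) : ConvexOn ℝ Set.univ (fun z => Metric.infDist z C) := by
  refine ⟨convex_univ, fun x _ y _ a b ha hb hab => ?_⟩
  obtain ⟨p, hp, hpd, -⟩ := exists_proj_infDist C hne hclosed hconv x
  obtain ⟨q, hq, hqd, -⟩ := exists_proj_infDist C hne hclosed hconv y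
  have hmem : a • p + b • q ∈ C := hconv hp hq ha hb hab
  calc Metric.infDist (a • x + b • y) C ≤ dist (a • x + b • y) (a • p + b • q) :=
        Metric.infDist_le_dist_of_mem hmem
    _ ≤ a * dist x p + b * dist y q := by
        rw [dist_eq_norm, dist_eq_norm, dist_eq_norm]
        calc ‖a • x + b • y - (a • p + b • q)‖ = ‖a • (x - p) + b • (y - q)‖ := by
              congr 1; module
          _ ≤ ‖a • (x - p)‖ + ‖b • (y - q)‖ := norm_add_le _ _
          _ = a * ‖x - p‖ + b * ‖y - q‖ := by
              rw [norm_smul, norm_smul, Real.norm_of_nonneg ha, Real.norm_of_nonneg hb]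
    _ = a * Metric.infDist x C + b * Metric.infDist y C := by rw [hpd, hqd]

/-- The squared distance to a nonempty closed convex set has a gradient everywhere. -/
lemma hasGradientAt_infDist_sq (C : Set H) (hne : C.Nonempty) (hclosed : IsClosed C)
    (hconv : Convex ℝ C) (x : H) {p : H} (hp : p ∈ C) (hpd : dist x p = Metric.infDist x C)
    (hproj : ∀ w ∈ C, ⟪x - p, w - p⟫ ≤ 0) :
    HasGradientAt (fun z => Metric.infDist z C ^ 2) ((2 : ℝ) • (x - p)) x := by
  rw [hasGradientAt_iff_isLittleO]
  have key : ∀ z : H,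
      |Metric.infDist z C ^ 2 - Metric.infDist x C ^ 2 - ⟪(2 : ℝ) • (x - p), z - x⟫|
        ≤ ‖z - x‖ ^ 2 := by
    intro z
    obtain ⟨q, hq, hqd, hqproj⟩ := exists_proj_infDist C hne hclosed hconv z
    have hxp : Metric.infDist x C = ‖x - p‖ := by rw [← hpd, dist_eq_norm]
    have hzq : Metric.infDist z C = ‖z - q‖ := by rw [← hqd, dist_eq_norm]
    have hinner : ⟪(2 : ℝ) • (x - p), z - x⟫ = 2 * ⟪x - p, z - x⟫ := by
      rw [real_inner_smul_left]
    rw [abs_le]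
    constructor
    · -- lower bound: d²(z) ≥ d²(x) + 2⟪x-p, z-x⟫
      have h1 : ⟪x - p, q - p⟫ ≤ 0 := hproj q hq
      have expand : ‖z - q‖ ^ 2 =
          ‖(z - x) + (p - q)‖ ^ 2 + ‖x - p‖ ^ 2 + 2 * ⟪(z - x) + (p - q), x - p⟫ := by
        have : z - q = ((z - x) + (p - q)) + (x - p) := by abel
        rw [this, norm_add_sq_real]
        ring
      have h2 : ⟪(z - x) + (p - q), x - p⟫ = ⟪z - x, x - p⟫ + ⟪p - q, x - p⟫ := by
        rw [inner_add_left]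
      have h3 : ⟪p - q, x - p⟫ = -⟪x - p, q - p⟫ := by
        rw [show p - q = -(q - p) by abel, inner_neg_left, real_inner_comm]
      have h4 : (0:ℝ) ≤ ‖(z - x) + (p - q)‖ ^ 2 := sq_nonneg _
      have hsym : ⟪z - x, x - p⟫ = ⟪x - p, z - x⟫ := real_inner_comm _ _
      rw [hinner, hzq, hxp]
      nlinarith [sq_nonneg ‖z - x‖]
    · -- upper bound: d²(z) ≤ ‖z - p‖² = d²(x) + 2⟪x-p,z-x⟫ + ‖z-x‖²
      have h1 : Metric.infDist z C ≤ dist z p := Metric.infDist_le_dist_of_mem hp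
      have h1' : Metric.infDist z C ^ 2 ≤ ‖z - p‖ ^ 2 := by
        rw [dist_eq_norm] at h1
        exact pow_le_pow_left₀ Metric.infDist_nonneg h1 2
      have expand : ‖z - p‖ ^ 2 = ‖z - x‖ ^ 2 + ‖x - p‖ ^ 2 + 2 * ⟪z - x, x - p⟫ := by
        have : z - p = (z - x) + (x - p) := by abel
        rw [this, norm_add_sq_real]; ring
      have hsym : ⟪z - x, x - p⟫ = ⟪x - p, z - x⟫ := real_inner_comm _ _
      rw [hzq] at h1'
      rw [hinner, hzq, hxp]
      linarith
  rw [Asymptotics.isLittleO_iff]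
  intro c hc
  filter_upwards [Metric.ball_mem_nhds x hc] with z hz
  have hzx : ‖z - x‖ < c := by rwa [Metric.mem_ball, dist_eq_norm] at hz
  calc ‖Metric.infDist z C ^ 2 - Metric.infDist x C ^ 2 - ⟪(2 : ℝ) • (x - p), z - x⟫‖
      ≤ ‖z - x‖ ^ 2 := by rw [Real.norm_eq_abs]; exact key z
    _ = ‖z - x‖ * ‖z - x‖ := sq ‖z - x‖ ▸ by ring
    _ ≤ c * ‖z - x‖ := by nlinarith [norm_nonneg (z - x)]

end aux

/-- Approximation of a closed convex set by a `C¹` convex body: the set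
`D = {x : d(x,C) ≤ r}` is closed, convex, has nonempty interior, sits between `C` and `U`,
and its boundary `{x : d(x,C) = r}` is a `C¹` hypersurface (the gradient of `d(·,C)²` is
nonzero there). -/
theorem smooth_convex_body_approximation {H : Type*} [NormedAddCommGroup H]
    [InnerProductSpace ℝ H] [CompleteSpace H] (C U : Set H)
    (hne : C.Nonempty) (hclosed : IsClosed C) (hconv : Convex ℝ C)
    (hU : IsOpen U) (r : ℝ) (hr : 0 < r)
    (hdist : ∀ x ∈ C, ∀ y ∉ U, 2 * r < dist x y) :
    IsClosed {x : H | Metric.infDist x C ≤ r} ∧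
    Convex ℝ {x : H | Metric.infDist x C ≤ r} ∧
    (interior {x : H | Metric.infDist x C ≤ r}).Nonempty ∧
    C ⊆ {x : H | Metric.infDist x C ≤ r} ∧
    {x : H | Metric.infDist x C ≤ r} ⊆ U ∧
    frontier {x : H | Metric.infDist x C ≤ r} = {x : H | Metric.infDist x C = r} ∧
    ∀ x ∈ frontier {x : H | Metric.infDist x C ≤ r},
      ∃ g : H, g ≠ 0 ∧ HasGradientAt (fun z => Metric.infDist z C ^ 2) g x := by
  set D : Set H := {x : H | Metric.infDist x C ≤ r} with hD
  have hcont : Continuous fun x : H => Metric.infDist x C :=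
    Metric.continuous_infDist_pt C
  have hDclosed : IsClosed D := isClosed_le hcont continuous_const
  have hCD : C ⊆ D := fun x hx => by
    simp only [hD, Set.mem_setOf_eq, Metric.infDist_zero_of_mem hx]
    exact hr.le
  have hconvOn := convexOn_infDist_of_convex C hne hclosed hconv
  have hDconv : Convex ℝ D := by
    have := hconvOn.convex_le r
    simpa using this
  -- interior description
  have hopen_lt : IsOpen {x : H | Metric.infDist x C < r} := isOpen_lt hcont continuous_const
  have hint : interior D = {x : H | Metric.infDist x C < r} := by
    apply Set.Subset.antisymm
    · intro x hx
      have hxD' : x ∈ D := interior_subset hx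
      have hxD : Metric.infDist x C ≤ r := hxD'
      rcases lt_or_eq_of_le hxD with h | h
      · exact h
      · exfalso
        obtain ⟨ε, hε, hball⟩ := Metric.isOpen_iff.1 isOpen_interior x hx
        obtain ⟨y, hy⟩ := hne
        -- point z = x + t (x - y) with t small
        by_cases hxy : x = y
        · have : Metric.infDist x C = 0 := by
            rw [hxy]; exact Metric.infDist_zero_of_mem hy
          rw [this] at h; exact hr.ne' h.symm
        · have hd : 0 < ‖x - y‖ := by
            rw [norm_pos_iff]; exact sub_ne_zero_of_ne hxy
          set t : ℝ := min (ε / (2 * ‖x - y‖)) 1 with ht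
          have ht0 : 0 < t := lt_min (by positivity) one_pos
          have ht1 : t ≤ 1 := min_le_right _ _
          set z : H := x + t • (x - y) with hz
          have hzball : z ∈ Metric.ball x ε := by
            rw [Metric.mem_ball, dist_eq_norm]
            have : z - x = t • (x - y) := by rw [hz]; abel
            rw [this, norm_smul, Real.norm_of_nonneg ht0.le]
            calc t * ‖x - y‖ ≤ (ε / (2 * ‖x - y‖)) * ‖x - y‖ := by
                  apply mul_le_mul_of_nonneg_right (min_le_left _ _) (norm_nonneg _)
              _ = ε / 2 := by field_simp
              _ < ε := by linarith
          have hzD' : z ∈ D := interior_subset (hball hzball)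
          have hzD : Metric.infDist z C ≤ r := hzD'
          -- convexity : x = (1/(1+t)) z + (t/(1+t)) y
          have hcomb : (t/(1+t)) • y + (1/(1+t)) • z = x := by
            rw [hz]
            have h1t : (1:ℝ) + t ≠ 0 := by positivity
            rw [smul_add, smul_smul]
            match_scalars <;> field_simp <;> ring
          have ha : (0:ℝ) ≤ t/(1+t) := by positivity
          have hb : (0:ℝ) ≤ 1/(1+t) := by positivity
          have hab : t/(1+t) + 1/(1+t) = 1 := by field_simp; ring
          have := hconvOn.2 (Set.mem_univ y) (Set.mem_univ z) ha hb hab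
          rw [hcomb] at this
          simp only [smul_eq_mul] at this
          have hy0 : Metric.infDist y C = 0 := Metric.infDist_zero_of_mem hy
          rw [h, hy0] at this
          have hlt : 1/(1+t) * Metric.infDist z C < r := by
            have h1 : 1/(1+t) < 1 := by
              rw [div_lt_one (by positivity)]; linarith
            calc 1/(1+t) * Metric.infDist z C ≤ 1/(1+t) * r := by
                  apply mul_le_mul_of_nonneg_left hzD hb
              _ < 1 * r := by apply mul_lt_mul_of_pos_right h1 hr
              _ = r := one_mul r
          simp only [mul_zero, zero_add] at this
          linarith
    · refine interior_maximal (fun y hy => ?_) hopen_lt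
      have hy' : Metric.infDist y C < r := hy
      show Metric.infDist y C ≤ r
      exact hy'.le
  have hfront : frontier D = {x : H | Metric.infDist x C = r} := by
    rw [frontier, hDclosed.closure_eq, hint]
    ext x
    simp only [Set.mem_diff, Set.mem_setOf_eq, hD, not_lt]
    constructor
    · rintro ⟨h1, h2⟩; exact le_antisymm h1 h2
    · intro h; exact ⟨h.le, h.ge⟩
  refine ⟨hDclosed, hDconv, ?_, hCD, ?_, hfront, ?_⟩
  · obtain ⟨y, hy⟩ := hne
    refine ⟨y, ?_⟩
    rw [hint]
    simpa [Metric.infDist_zero_of_mem hy] using hr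
  · intro x hx
    by_contra hxU
    have hxD : Metric.infDist x C ≤ r := hx
    have h2r : 2 * r ≤ Metric.infDist x C := by
      have : Nonempty C := hne.to_subtype
      rw [Metric.infDist_eq_iInf]
      refine le_ciInf fun y => ?_
      rw [dist_comm]
      exact (hdist y y.2 x hxU).le
    linarith
  · intro x hx
    rw [hfront] at hx
    have hxr : Metric.infDist x C = r := hx
    obtain ⟨p, hp, hpd, hproj⟩ := exists_proj_infDist C hne hclosed hconv x
    refine ⟨(2 : ℝ) • (x - p), ?_, hasGradientAt_infDist_sq C hne hclosed hconv x hp hpd hproj⟩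
    intro hzero
    have : x - p = 0 := by
      have := smul_eq_zero.1 hzero
      rcases this with h | h
      · norm_num at h
      · exact h
    have hxp : x = p := sub_eq_zero.1 this
    have : Metric.infDist x C = 0 := by rw [← hpd, hxp, dist_self]
    rw [hxr] at this
    exact hr.ne' this
end
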